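/- For any p-strings x and y with fce(x) = fce(y), the lexicographic comparison ⟨x⟩ < ⟨y⟩ holds if and only if ⟨x[2..]⟩ < ⟨y[2..]⟩ (equivalently: removing the first characters preserves lexicographic order of p-encodings when the first-character encodings agree). -/

import Mathlib

/-- Symbols of a parameterized string: static symbols `s a` (from Σs) and
parameter symbols `p a` (from Σp). -/
inductive PSym where
  | s : ℕ → PSym
  | p : ℕ → PSym
deriving DecidableEq

/-- Symbols of a p-encoded string: static symbols, finite distances, and ∞. -/
inductive Enc where
  | s : ℕ → Enc
  | fin : ℕ → Enc
  | inf : Enc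
deriving DecidableEq

/-- Order embedding: static symbols < natural numbers < ∞. -/
def Enc.toPair : Enc → ℕ ×ₗ ℕ
  | .s a => toLex (0, a)
  | .fin d => toLex (1, d)
  | .inf => toLex (2, 0)

instance : LinearOrder Enc :=
  LinearOrder.lift' Enc.toPair (by
    rintro (a | a | _) (b | b | _) h <;>
      simp_all [Enc.toPair, toLex_inj, Prod.ext_iff])

/-- Largest position `j < i` (0-based) carrying the same symbol as position `i`. -/
def prevOcc (w : List PSym) (i : ℕ) : Option ℕ :=
  ((List.range i).filter (fun j => w[j]? = w[i]?)).max?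

/-- The p-encoding of position `i` (0-based) of `w`. -/
def pencSym (w : List PSym) (i : ℕ) : Enc :=
  match w[i]? with
  | some (PSym.s a) => Enc.s a
  | some (PSym.p _) =>
    match prevOcc w i with
    | some j => Enc.fin (i - j)
    | none => Enc.inf
  | none => Enc.inf

/-- The p-encoding ⟨w⟩ of a p-string `w`. -/
def penc (w : List PSym) : List Enc :=
  (List.range w.length).map (pencSym w)

/-- Lexicographic (strict) order on p-encoded strings. -/
def lexLt (x y : List Enc) : Prop := List.Lex (· < ·) x y

def lexLe (x y : List Enc) : Prop := lexLt x y ∨ x = y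

/-- Length of the longest common prefix. -/
def lcp {α : Type*} [DecidableEq α] : List α → List α → ℕ
  | a :: x, b :: y => if a = b then lcp x y + 1 else 0
  | _, _ => 0

/-- Number of ∞'s in the longest common prefix of two p-encoded strings. -/
def lcpInf (x y : List Enc) : ℕ := (x.take (lcp x y)).count Enc.inf

/-- Number of distinct p-symbols occurring in `w` (denoted |w|_p). -/
def distinctP (w : List PSym) : ℕ :=
  (w.filterMap (fun s => match s with | PSym.p a => some a | PSym.s _ => none)).dedup.length

/-- For `w` starting with a p-symbol: the rank of `w[1]` among the distinct
p-symbols of `w[1..h+1]`, where `h+1 = min{|w|, second occurrence of w[1] in w}`. -/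
def fceRank (w : List PSym) : ℕ :=
  match w with
  | [] => 0
  | c :: rest => distinctP ((c :: rest).take (min (c :: rest).length (2 + rest.idxOf c)))

/-- The function fce from the paper; `fce ε = $` is modelled as `Enc.s 0`. -/
def fce (w : List PSym) : Enc :=
  match w with
  | [] => Enc.s 0
  | PSym.s a :: _ => Enc.s a
  | w => Enc.fin (fceRank w)

/-!
If `c` is a p-symbol, then `⟨c t⟩ = ∞ ⟨t⟩'`, where `⟨t⟩'` is `⟨t⟩` with a single entry changed:
at the first occurrence `k` of `c` in `t`, the `∞` of `⟨t⟩` becomes the distance `k + 1` back to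
`c`. Every other distance at position `i` of `⟨t⟩` is at most `i`, so this mark is recognizable,
and `fce (c t) - 1` is the number of `∞`s of `⟨t⟩` before it. At the first difference of two
marked encodings, a mark can only change the outcome of the comparison if it faces an `∞` of the
other encoding; that `∞` would then precede the other mark and make the two fce values differ.
-/

namespace Enc

theorem lt_iff_toPair_lt {a b : Enc} : a < b ↔ a.toPair < b.toPair := Iff.rfl

theorem s_lt_fin (a d : ℕ) : s a < fin d := by
  simp [lt_iff_toPair_lt, toPair, Prod.Lex.toLex_lt_toLex]

theorem fin_lt_inf (d : ℕ) : fin d < inf := by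
  simp [lt_iff_toPair_lt, toPair, Prod.Lex.toLex_lt_toLex]

theorem fin_lt_fin {d d' : ℕ} : fin d < fin d' ↔ d < d' := by
  simp [lt_iff_toPair_lt, toPair, Prod.Lex.toLex_lt_toLex]

end Enc

theorem lexLt_iff_exists_getElem? {x y : List Enc} :
    lexLt x y ↔ ∃ i : ℕ, (∀ j < i, x[j]? = y[j]?) ∧ x[i]? < y[i]? := by
  induction x generalizing y with
  | nil =>
    cases y with
    | nil => simp [lexLt]
    | cons b y => exact ⟨fun _ => ⟨0, by simp, Option.none_lt_some⟩, fun _ => List.Lex.nil⟩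
  | cons a x ih =>
    cases y with
    | nil => simp [lexLt]
    | cons b y =>
      rw [lexLt, List.cons_lex_cons_iff, ← lexLt, ih]
      constructor
      · rintro (hab | ⟨rfl, i, hpre, hi⟩)
        · exact ⟨0, by simp, by simpa using hab⟩
        · refine ⟨i + 1, fun j hj => ?_, by simpa using hi⟩
          cases j <;> simp_all
      · rintro ⟨_ | i, hpre, hi⟩
        · exact Or.inl (by simpa using hi)
        · refine Or.inr ⟨by simpa using hpre 0 (by omega), i, fun j hj => ?_, by simpa using hi⟩
          simpa using hpre (j + 1) (by omega)

theorem lexLt_trichotomy (x y : List Enc) : lexLt x y ∨ x = y ∨ lexLt y x := by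
  by_cases h : lexLt x y
  · exact Or.inl h
  · rcases List.le_iff_lt_or_eq.1 (List.not_lt.1 h) with h' | h'
    · exact Or.inr (Or.inr h')
    · exact Or.inr (Or.inl h'.symm)

def BoundedDistances (B : List Enc) : Prop :=
  ∀ i d, B[i]? = some (Enc.fin d) → d ≤ i

theorem List.getElem?_set_of_not {α : Type*} {l : List α} {i j : ℕ} {a : α}
    (h : ¬(j = i ∧ i < l.length)) : (l.set i a)[j]? = l[j]? := by
  by_cases hji : j = i
  · subst hji
    rw [List.getElem?_eq_none (by simpa using h), List.getElem?_eq_none (by simpa using h)]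
  · exact List.getElem?_set_ne (Ne.symm hji)

theorem List.take_eq_take_of_getElem?_eq {α : Type*} {L L' : List α} {i : ℕ}
    (h : ∀ j < i, L[j]? = L'[j]?) : L.take i = L'.take i :=
  List.ext_getElem? fun j => by
    simp only [List.getElem?_take]
    split_ifs with hj
    exacts [h j hj, rfl]

section Marking

variable {B D : List Enc} {k l : ℕ}

theorem BoundedDistances.getElem?_set_eq_fin_succ_iff (hB : BoundedDistances B) {i : ℕ} :
    (B.set k (.fin (k + 1)))[i]? = some (.fin (i + 1)) ↔ i = k ∧ k < B.length := by
  by_cases hik : i = k ∧ k < B.length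
  · obtain ⟨rfl, hk⟩ := hik
    simp [hk]
  · rw [List.getElem?_set_of_not hik, iff_false_right hik]
    intro h
    have := hB i (i + 1) h
    omega

theorem BoundedDistances.eq_inf_of_fin_succ_lt (hB : BoundedDistances B) {i : ℕ}
    (h : some (Enc.fin (i + 1)) < B[i]?) : B[i]? = some .inf := by
  rcases hi : B[i]? with _ | (a | d | _)
  · simp [hi] at h
  · rw [hi, Option.some_lt_some] at h
    exact absurd h (lt_asymm (Enc.s_lt_fin a _))
  · rw [hi, Option.some_lt_some, Enc.fin_lt_fin] at h
    have := hB i d hi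
    omega
  · rfl

theorem getElem?_eq_of_getElem?_set_eq (hB : BoundedDistances B) (hD : BoundedDistances D)
    (hBk : k < B.length → B[k]? = some .inf) (hDl : l < D.length → D[l]? = some .inf) {i : ℕ}
    (h : (B.set k (.fin (k + 1)))[i]? = (D.set l (.fin (l + 1)))[i]?) : B[i]? = D[i]? := by
  by_cases hik : i = k ∧ k < B.length <;> by_cases hil : i = l ∧ l < D.length
  · rw [hik.1, hBk hik.2, ← hik.1, hil.1, hDl hil.2]
  · rw [hB.getElem?_set_eq_fin_succ_iff.2 hik] at h
    exact absurd h.symm (hD.getElem?_set_eq_fin_succ_iff.not.2 hil)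
  · rw [hD.getElem?_set_eq_fin_succ_iff.2 hil] at h
    exact absurd h (hB.getElem?_set_eq_fin_succ_iff.not.2 hik)
  · rwa [List.getElem?_set_of_not hik, List.getElem?_set_of_not hil] at h

theorem getElem?_ne_inf_of_prefix_set_eq (hB : BoundedDistances B) (hD : BoundedDistances D)
    (hBk : k < B.length → B[k]? = some .inf) (hDl : l < D.length → D[l]? = some .inf)
    (hcount : (B.take k).count .inf = (D.take l).count .inf)
    (hpre : ∀ j < k, (B.set k (.fin (k + 1)))[j]? = (D.set l (.fin (l + 1)))[j]?)
    (hl : ¬(k = l ∧ l < D.length)) : D[k]? ≠ some .inf := by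
  intro hDk
  have hkD : k < D.length := by
    by_contra! hkD
    rw [List.getElem?_eq_none hkD] at hDk
    contradiction
  -- a mark of `D` before `k` would have to be a mark of `B` as well
  have hkl : k < min l D.length := by
    by_contra! hlk
    have hmark := hpre l (by omega)
    rw [(hD.getElem?_set_eq_fin_succ_iff (k := l)).2 ⟨rfl, by omega⟩] at hmark
    have := hB.getElem?_set_eq_fin_succ_iff.1 hmark
    omega
  have hstep : (D.take (k + 1)).count .inf = (D.take k).count .inf + 1 := by
    rw [List.take_add_one, hDk]
    simp
  have hmono : (D.take (k + 1)).count .inf ≤ (D.take l).count .inf := by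
    rw [List.take_eq_take_min (i := l)]
    exact (List.take_prefix_take_left hkl).count_le _
  have hprefix : B.take k = D.take k := List.take_eq_take_of_getElem?_eq fun j hj =>
    getElem?_eq_of_getElem?_set_eq hB hD hBk hDl (hpre j hj)
  rw [hprefix] at hcount
  omega

theorem lexLt_of_lexLt_set (hB : BoundedDistances B) (hD : BoundedDistances D)
    (hBk : k < B.length → B[k]? = some .inf) (hDl : l < D.length → D[l]? = some .inf)
    (hcount : (B.take k).count .inf = (D.take l).count .inf)
    (h : lexLt (B.set k (.fin (k + 1))) (D.set l (.fin (l + 1)))) : lexLt B D := by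
  obtain ⟨i, hpre, hi⟩ := lexLt_iff_exists_getElem?.1 h
  have hpreBD : ∀ j < i, B[j]? = D[j]? := fun j hj =>
    getElem?_eq_of_getElem?_set_eq hB hD hBk hDl (hpre j hj)
  refine lexLt_iff_exists_getElem?.2 ⟨i, hpreBD, ?_⟩
  by_cases hik : i = k ∧ k < B.length
  · rw [hB.getElem?_set_eq_fin_succ_iff.2 hik] at hi
    have hil : ¬(i = l ∧ l < D.length) := fun hil => by
      rw [hD.getElem?_set_eq_fin_succ_iff.2 hil] at hi
      exact lt_irrefl _ (Option.some_lt_some.1 hi)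
    rw [List.getElem?_set_of_not hil] at hi
    obtain rfl := hik.1
    exact absurd (hD.eq_inf_of_fin_succ_lt hi)
      (getElem?_ne_inf_of_prefix_set_eq hB hD hBk hDl hcount hpre hil)
  · rw [List.getElem?_set_of_not hik] at hi
    by_cases hil : i = l ∧ l < D.length
    · rw [hD.getElem?_set_eq_fin_succ_iff.2 hil] at hi
      rw [hil.1, hDl hil.2, ← hil.1]
      rcases hBi : B[i]? with _ | a
      · exact Option.none_lt_some
      · rw [hBi, Option.some_lt_some] at hi
        exact Option.some_lt_some.2 (hi.trans (Enc.fin_lt_inf _))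
    · rwa [List.getElem?_set_of_not hil] at hi

theorem lexLt_set_iff (hB : BoundedDistances B) (hD : BoundedDistances D)
    (hBk : k < B.length → B[k]? = some .inf) (hDl : l < D.length → D[l]? = some .inf)
    (hcount : (B.take k).count .inf = (D.take l).count .inf) :
    lexLt (B.set k (.fin (k + 1))) (D.set l (.fin (l + 1))) ↔ lexLt B D := by
  refine ⟨lexLt_of_lexLt_set hB hD hBk hDl hcount, fun h => ?_⟩
  rcases lexLt_trichotomy (B.set k (.fin (k + 1))) (D.set l (.fin (l + 1))) with hlt | heq | hgt
  · exact hlt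
  · have : B = D := List.ext_getElem? fun i =>
      getElem?_eq_of_getElem?_set_eq hB hD hBk hDl (by rw [heq])
    exact absurd (this ▸ h) (List.lt_irrefl D)
  · exact absurd (lexLt_of_lexLt_set hD hB hDl hBk hcount.symm hgt) (List.lt_asymm h)

end Marking

section Encoding

variable {w t : List PSym} {c : PSym} {i j : ℕ}

theorem prevOcc_eq_some_iff :
    prevOcc w i = some j ↔ j < i ∧ w[j]? = w[i]? ∧ ∀ m, j < m → m < i → w[m]? ≠ w[i]? := by
  simp only [prevOcc, List.max?_eq_some_iff, List.mem_filter, List.mem_range, decide_eq_true_eq]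
  constructor
  · rintro ⟨⟨hj, he⟩, hmax⟩
    exact ⟨hj, he, fun m hjm hmi hm => absurd (hmax m ⟨hmi, hm⟩) (by omega)⟩
  · rintro ⟨hj, he, hmax⟩
    exact ⟨⟨hj, he⟩, fun m ⟨hm, hme⟩ => not_lt.1 fun hjm => hmax m hjm hm hme⟩

theorem prevOcc_eq_none_iff : prevOcc w i = none ↔ ∀ j < i, w[j]? ≠ w[i]? := by
  simp [prevOcc, List.filter_eq_nil_iff]

theorem prevOcc_take {n : ℕ} (h : i < n) : prevOcc (w.take n) i = prevOcc w i := by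
  unfold prevOcc
  congr 1
  refine List.filter_congr fun j hj => ?_
  rw [List.mem_range] at hj
  simp [h, hj.trans h]

theorem prevOcc_cons_succ_of_eq_some (h : prevOcc t i = some j) :
    prevOcc (c :: t) (i + 1) = some (j + 1) := by
  obtain ⟨hj, he, hmax⟩ := prevOcc_eq_some_iff.1 h
  refine prevOcc_eq_some_iff.2 ⟨by omega, by simpa using he, fun m hjm hmi => ?_⟩
  obtain ⟨m, rfl⟩ : ∃ m', m = m' + 1 := ⟨m - 1, by omega⟩
  simpa using hmax m (by omega) (by omega)

theorem prevOcc_cons_succ_of_eq_none (h : prevOcc t i = none) :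
    prevOcc (c :: t) (i + 1) = if t[i]? = some c then some 0 else none := by
  rw [prevOcc_eq_none_iff] at h
  split_ifs with hc
  · refine prevOcc_eq_some_iff.2 ⟨by omega, by simp [hc], fun m hm hmi => ?_⟩
    obtain ⟨m, rfl⟩ : ∃ m', m = m' + 1 := ⟨m - 1, by omega⟩
    simpa using h m (by omega)
  · refine prevOcc_eq_none_iff.2 fun m hm => ?_
    cases m with
    | zero => simpa [eq_comm] using hc
    | succ m => simpa using h m (by omega)

theorem getElem?_eq_some_and_prevOcc_eq_none_iff :
    t[i]? = some c ∧ prevOcc t i = none ↔ i = t.idxOf c ∧ t.idxOf c < t.length := by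
  constructor
  · rintro ⟨hc, hp⟩
    obtain ⟨hi, hti⟩ := List.getElem?_eq_some_iff.1 hc
    rw [prevOcc_eq_none_iff, hc] at hp
    have hidx : t.idxOf c = i := (List.findIdx_eq hi).2 ⟨by simp [hti], fun j hj => by
      simpa [List.getElem?_eq_getElem (hj.trans hi)] using hp j hj⟩
    exact ⟨hidx.symm, hidx ▸ hi⟩
  · rintro ⟨rfl, hi⟩
    have hc : t[t.idxOf c]? = some c := List.getElem?_eq_some_iff.2 ⟨hi, List.getElem_idxOf hi⟩
    refine ⟨hc, prevOcc_eq_none_iff.2 fun j hj => ?_⟩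
    rw [hc, List.getElem?_eq_getElem (hj.trans hi)]
    simpa using List.not_of_lt_findIdx hj

theorem pencSym_take {n : ℕ} (h : i < n) : pencSym (w.take n) i = pencSym w i := by
  simp only [pencSym, List.getElem?_take, if_pos h, prevOcc_take h]

theorem pencSym_eq_inf_iff {e : ℕ} (h : w[i]? = some (.p e)) :
    pencSym w i = .inf ↔ prevOcc w i = none := by
  unfold pencSym
  rw [h]
  rcases prevOcc w i <;> simp

theorem le_of_pencSym_eq_fin {d : ℕ} (h : pencSym w i = .fin d) : d ≤ i := by
  unfold pencSym at h
  rcases hp : prevOcc w i with _ | j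
  · rcases hw : w[i]? with _ | (a | a) <;> simp [hw, hp] at h
  · have := (prevOcc_eq_some_iff.1 hp).1
    rcases hw : w[i]? with _ | (a | a) <;> simp [hw, hp] at h
    omega

theorem pencSym_cons_succ (h : ¬(t[i]? = some c ∧ prevOcc t i = none)) :
    pencSym (c :: t) (i + 1) = pencSym t i := by
  rcases hp : prevOcc t i with _ | j
  · have hc : t[i]? ≠ some c := fun hc => h ⟨hc, hp⟩
    simp [pencSym, prevOcc_cons_succ_of_eq_none hp, hc, hp]
  · simp [pencSym, prevOcc_cons_succ_of_eq_some hp, hp]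

theorem pencSym_cons_succ_of_first {e : ℕ} (h : t[i]? = some (.p e)) (hp : prevOcc t i = none) :
    pencSym (.p e :: t) (i + 1) = .fin (i + 1) := by
  simp [pencSym, h, prevOcc_cons_succ_of_eq_none hp]

theorem getElem?_penc : (penc w)[i]? = if i < w.length then some (pencSym w i) else none := by
  split_ifs with h <;> simp [penc, h]

theorem length_penc (w : List PSym) : (penc w).length = w.length := by
  simp [penc]

theorem penc_take (w : List PSym) (n : ℕ) : penc (w.take n) = (penc w).take n :=
  List.ext_getElem? fun i => by
    by_cases h : i < n <;> simp [getElem?_penc, h, pencSym_take]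

theorem boundedDistances_penc (w : List PSym) : BoundedDistances (penc w) := fun i d h => by
  rw [getElem?_penc] at h
  split_ifs at h
  exact le_of_pencSym_eq_fin (Option.some.inj h)

theorem penc_cons_s (a : ℕ) (t : List PSym) : penc (.s a :: t) = .s a :: penc t := by
  refine List.ext_getElem? fun i => ?_
  rcases i with _ | i
  · simp [getElem?_penc, pencSym]
  · by_cases h : t[i]? = some (.s a) ∧ prevOcc t i = none
    · simp [getElem?_penc, pencSym, h.1]
    · simp [getElem?_penc, pencSym_cons_succ h]

theorem penc_cons_p (e : ℕ) (t : List PSym) :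
    penc (.p e :: t) = .inf :: (penc t).set (t.idxOf (.p e)) (.fin (t.idxOf (.p e) + 1)) := by
  refine List.ext_getElem? fun i => ?_
  rcases i with _ | i
  · simp [getElem?_penc, pencSym, prevOcc]
  · by_cases h : i = t.idxOf (.p e) ∧ t.idxOf (.p e) < t.length
    · obtain ⟨h1, h2⟩ := getElem?_eq_some_and_prevOcc_eq_none_iff.2 h
      obtain ⟨rfl, hi⟩ := h
      rw [List.getElem?_cons_succ, getElem?_penc, if_pos (by simpa using hi),
        pencSym_cons_succ_of_first h1 h2, List.getElem?_set_self (by rwa [length_penc])]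
    · rw [List.getElem?_cons_succ, List.getElem?_set_of_not (by rwa [length_penc])]
      rw [← getElem?_eq_some_and_prevOcc_eq_none_iff.not] at h
      simp [getElem?_penc, pencSym_cons_succ h]

theorem getElem?_penc_idxOf {e : ℕ} (h : t.idxOf (.p e) < t.length) :
    (penc t)[t.idxOf (.p e)]? = some .inf := by
  obtain ⟨h1, h2⟩ := getElem?_eq_some_and_prevOcc_eq_none_iff.2 ⟨rfl, h⟩
  rw [getElem?_penc, if_pos h, (pencSym_eq_inf_iff h1).2 h2]

theorem penc_append_singleton (w : List PSym) (c : PSym) :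
    penc (w ++ [c]) = penc w ++ [pencSym (w ++ [c]) w.length] := by
  have hpre : (penc (w ++ [c])).take w.length = penc w := by
    rw [← penc_take, List.take_left']
    rfl
  rw [← hpre]
  simp [penc, List.range_succ]

theorem mem_filterMap_p_iff {e : ℕ} :
    e ∈ w.filterMap (fun s => match s with | PSym.p a => some a | PSym.s _ => none) ↔
      PSym.p e ∈ w := by
  simp only [List.mem_filterMap]
  constructor
  · rintro ⟨_ | a, ha, h⟩ <;> simp_all
  · exact fun h => ⟨_, h, rfl⟩

theorem pencSym_append_singleton_p_eq_inf_iff {e : ℕ} :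
    pencSym (w ++ [.p e]) w.length = .inf ↔ PSym.p e ∉ w := by
  rw [pencSym_eq_inf_iff (e := e) (by simp), prevOcc_eq_none_iff, List.mem_iff_getElem?]
  simp only [List.getElem?_concat_length, ne_eq, not_exists]
  constructor
  · intro h n hn
    have hlt : n < w.length := by
      by_contra!
      rw [List.getElem?_eq_none this] at hn
      contradiction
    exact h n hlt (by rwa [List.getElem?_append_left hlt])
  · intro h n hn
    rw [List.getElem?_append_left hn]
    exact h n

theorem distinctP_append_singleton_p (w : List PSym) (e : ℕ) :
    distinctP (w ++ [.p e]) = distinctP w + if PSym.p e ∈ w then 0 else 1 := by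
  simp only [distinctP, List.filterMap_append, ← List.card_toFinset, List.toFinset_append]
  split_ifs with h <;>
    simp [Finset.union_comm, -List.mem_filterMap, mem_filterMap_p_iff, h]

theorem distinctP_eq_count_inf (w : List PSym) : distinctP w = (penc w).count .inf := by
  induction w using List.reverseRecOn with
  | nil => rfl
  | append_singleton w c ih =>
    rw [penc_append_singleton, List.count_append, ← ih]
    cases c with
    | s a => simp [distinctP, pencSym]
    | p e =>
      rw [distinctP_append_singleton_p]
      by_cases h : PSym.p e ∈ w <;>
        simp [List.count_singleton, pencSym_append_singleton_p_eq_inf_iff, h]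

theorem fceRank_cons_p (e : ℕ) (t : List PSym) :
    fceRank (.p e :: t) = ((penc t).take (t.idxOf (.p e))).count .inf + 1 := by
  set k := t.idxOf (.p e)
  have hmin : (penc (.p e :: t)).take (min (PSym.p e :: t).length (2 + k))
      = (penc (.p e :: t)).take (k + 2) := by
    rw [List.take_eq_take_min (i := k + 2), length_penc, min_comm]
    congr 1
    omega
  have hmark : (((penc t).set k (.fin (k + 1)))[k]?.toList).count .inf = 0 := by
    rw [List.getElem?_set_self']
    cases (penc t)[k]? <;> simp
  rw [fceRank, distinctP_eq_count_inf, penc_take, hmin, penc_cons_p, List.take_succ_cons,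
    List.count_cons_self, List.take_add_one, List.count_append, hmark, List.take_set,
    List.set_eq_of_length_le (List.length_take_le _ _)]

end Encoding

/-- If fce(x) = fce(y), then ⟨x⟩ < ⟨y⟩ iff ⟨x[2..]⟩ < ⟨y[2..]⟩. -/
theorem stmt4 (x y : List PSym) (hx : x ≠ []) (hy : y ≠ [])
    (h : fce x = fce y) :
    lexLt (penc x) (penc y) ↔ lexLt (penc x.tail) (penc y.tail) := by
  obtain ⟨c, t, rfl⟩ := List.exists_cons_of_ne_nil hx
  obtain ⟨d, u, rfl⟩ := List.exists_cons_of_ne_nil hy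
  rcases c with a | e <;> rcases d with b | f
  · obtain rfl : a = b := by simpa [fce] using h
    rw [List.tail_cons, List.tail_cons, penc_cons_s, penc_cons_s]
    exact List.cons_lt_cons_self
  · simp [fce] at h
  · simp [fce] at h
  · have hcount : ((penc t).take (t.idxOf (.p e))).count .inf
        = ((penc u).take (u.idxOf (.p f))).count .inf := by
      simpa [fce, fceRank_cons_p] using h
    rw [List.tail_cons, List.tail_cons, penc_cons_p, penc_cons_p]
    exact List.cons_lt_cons_self.trans <| lexLt_set_iff (boundedDistances_penc t)
      (boundedDistances_penc u) (fun h => getElem?_penc_idxOf (by rwa [length_penc] at h))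
      (fun h => getElem?_penc_idxOf (by rwa [length_penc] at h)) hcount
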